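/- (Theorem 1: correctness of the DRed algorithm.) Let Π be a Datalog program, E a dataset, I = mat(Π, E), and E⁺, E⁻ datasets; put E⁻′ = (E⁻ ∩ E) \ E⁺ and E⁺′ = E⁺ \ E. Define the overdeletion sequence by D_0 = ∅, N_0 = E⁻′, Δ⁻_k = N_k \ D_k, N_{k+1} = ⋃_{r∈Π} ( r[(I \ D_k) ∸ Δ⁻_k] ∩ ((I \ D_k) \ Δ⁻_k) ), D_{k+1} = D_k ∪ Δ⁻_k, and D = ⋃_k D_k. Define the rederived set R = ((E \ E⁻′) ∩ D) ∪ ⋃_{r∈Π} ( r[I \ D] ∩ D ). Define the addition sequence by A_0 = ∅, M_0 = (R ∪ E⁺′) \ (I \ D), Δ⁺_k = M_k \ ((I \ D) ∪ A_k), A_{k+1} = A_k ∪ Δ⁺_k, M_{k+1} = ⋃_{r∈Π} ( r[((I \ D) ∪ A_{k+1}) ∸ Δ⁺_k] \ ((I \ D) ∪ A_{k+1}) ), and A = ⋃_k A_k. Then (I \ D) ∪ A = mat(Π, (E \ E⁻) ∪ E⁺): DRed correctly updates the materialisation of Π with respect to E to the materialisation with respect to (E \ E⁻) ∪ E⁺.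 -/
import Mathlib


namespace Datalog

/-- An atom `P(t₁,…,tₖ)`: a predicate symbol applied to a list of terms, where
`Sum.inl v` denotes the variable `v` and `Sum.inr c` denotes the constant `c`. -/
structure Atom where
  pred : ℕ
  args : List (ℕ ⊕ ℕ)
deriving DecidableEq

/-- A fact: a variable-free atom, i.e. a predicate applied to constants only. -/
structure Fact where
  pred : ℕ
  args : List ℕ
deriving DecidableEq

/-- Applying a substitution `σ` (a map from variables to constants) to an atom. -/
def Atom.subst (A : Atom) (σ : ℕ → ℕ) : Fact :=
  ⟨A.pred, A.args.map (Sum.elim σ id)⟩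

/-- The set of variables occurring in an atom. -/
def Atom.vars (A : Atom) : Set ℕ := { v | Sum.inl v ∈ A.args }

/-- A Datalog rule: a head atom and a finite set of body atoms, which is safe:
every variable of the head occurs in some body atom. -/
structure Rule where
  head : Atom
  body : Finset Atom
  safe : ∀ v ∈ head.vars, ∃ B ∈ body, v ∈ B.vars

/-- `r[I] = { h(rσ) | b(rσ) ⊆ I }`. -/
def Rule.eval (r : Rule) (I : Set Fact) : Set Fact :=
  { f | ∃ σ : ℕ → ℕ, (∀ B ∈ r.body, B.subst σ ∈ I) ∧ f = r.head.subst σ }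

/-- `r[I ∸ Δ] = { h(rσ) | b(rσ) ⊆ I and b(rσ) ∩ Δ ≠ ∅ }`. -/
def Rule.evalDelta (r : Rule) (I Δ : Set Fact) : Set Fact :=
  { f | ∃ σ : ℕ → ℕ, (∀ B ∈ r.body, B.subst σ ∈ I) ∧
        (∃ B ∈ r.body, B.subst σ ∈ Δ) ∧ f = r.head.subst σ }

/-- `Π[I] = ⋃_{r ∈ Π} r[I]`. -/
def progEval (P : Set Rule) (I : Set Fact) : Set Fact := ⋃ r ∈ P, r.eval I

/-- `Π[I ∸ Δ] = ⋃_{r ∈ Π} r[I ∸ Δ]`. -/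
def progEvalDelta (P : Set Rule) (I Δ : Set Fact) : Set Fact := ⋃ r ∈ P, r.evalDelta I Δ

/-- `I_0 = E`, `I_{i+1} = I_i ∪ Π[I_i]`. -/
def matSeq (P : Set Rule) (E : Set Fact) : ℕ → Set Fact
  | 0 => E
  | n + 1 => matSeq P E n ∪ progEval P (matSeq P E n)

/-- The materialisation `mat(Π, E) = ⋃_{i ≥ 0} I_i`. -/
def mat (P : Set Rule) (E : Set Fact) : Set Fact := ⋃ n, matSeq P E n

/-- The overdeletion sequence `(D_k, N_k)`: `D_0 = ∅`, `N_0 = E⁻′`,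
`Δ⁻_k = N_k \ D_k`,
`N_{k+1} = ⋃_{r∈Π} (r[(I \ D_k) ∸ Δ⁻_k] ∩ ((I \ D_k) \ Δ⁻_k))`,
`D_{k+1} = D_k ∪ Δ⁻_k`. -/
def delSeq (P : Set Rule) (I Em : Set Fact) : ℕ → Set Fact × Set Fact
  | 0 => (∅, Em)
  | k + 1 =>
      let s := delSeq P I Em k
      let Δ := s.2 \ s.1
      (s.1 ∪ Δ, ⋃ r ∈ P, (r.evalDelta (I \ s.1) Δ ∩ ((I \ s.1) \ Δ)))

/-- The addition sequence `(A_k, M_k)` over the base set `J`: `A_0 = ∅`,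
`M_0` given, `Δ⁺_k = M_k \ (J ∪ A_k)`, `A_{k+1} = A_k ∪ Δ⁺_k`,
`M_{k+1} = ⋃_{r∈Π} (r[(J ∪ A_{k+1}) ∸ Δ⁺_k] \ (J ∪ A_{k+1}))`. -/
def addSeq (P : Set Rule) (J M0 : Set Fact) : ℕ → Set Fact × Set Fact
  | 0 => (∅, M0)
  | k + 1 =>
      let s := addSeq P J M0 k
      let Δ := s.2 \ (J ∪ s.1)
      (s.1 ∪ Δ, ⋃ r ∈ P, (r.evalDelta (J ∪ (s.1 ∪ Δ)) Δ \ (J ∪ (s.1 ∪ Δ))))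

/-! ### Auxiliary lemmas -/

lemma eval_mono (r : Rule) {I J : Set Fact} (h : I ⊆ J) : r.eval I ⊆ r.eval J := by
  rintro f ⟨σ, hb, rfl⟩
  exact ⟨σ, fun B hB => h (hb B hB), rfl⟩

lemma evalDelta_subset (r : Rule) (I Δ : Set Fact) : r.evalDelta I Δ ⊆ r.eval I := by
  rintro f ⟨σ, hb, _, rfl⟩
  exact ⟨σ, hb, rfl⟩

lemma mem_progEval {P : Set Rule} {I : Set Fact} {f : Fact} :
    f ∈ progEval P I ↔ ∃ r ∈ P, f ∈ r.eval I := by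
  simp [progEval]

lemma progEval_mono (P : Set Rule) {I J : Set Fact} (h : I ⊆ J) :
    progEval P I ⊆ progEval P J := by
  intro f hf
  obtain ⟨r, hr, hfr⟩ := mem_progEval.1 hf
  exact mem_progEval.2 ⟨r, hr, eval_mono r h hfr⟩

lemma matSeq_mono (P : Set Rule) (E : Set Fact) : Monotone (matSeq P E) :=
  monotone_nat_of_le_succ fun _ => Set.subset_union_left

lemma subset_mat (P : Set Rule) (E : Set Fact) : E ⊆ mat P E :=
  Set.subset_iUnion (matSeq P E) 0

lemma matSeq_subset_mat (P : Set Rule) (E : Set Fact) (n : ℕ) : matSeq P E n ⊆ mat P E :=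
  Set.subset_iUnion (matSeq P E) n

lemma finset_bound (C : ℕ → Set Fact) (hC : Monotone C) (g : Atom → Fact) :
    ∀ s : Finset Atom, (∀ a ∈ s, ∃ n, g a ∈ C n) → ∃ n, ∀ a ∈ s, g a ∈ C n := by
  classical
  intro s
  induction s using Finset.induction_on with
  | empty => intro _; exact ⟨0, by simp⟩
  | @insert a s ha ih =>
    intro h
    obtain ⟨n, hn⟩ := h a (Finset.mem_insert_self a s)
    obtain ⟨m, hm⟩ := ih fun b hb => h b (Finset.mem_insert_of_mem hb)
    refine ⟨max n m, fun b hb => ?_⟩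
    rcases Finset.mem_insert.mp hb with rfl | hb
    · exact hC (le_max_left n m) hn
    · exact hC (le_max_right n m) (hm b hb)

lemma mat_closed (P : Set Rule) (E : Set Fact) : progEval P (mat P E) ⊆ mat P E := by
  intro f hf
  obtain ⟨r, hr, σ, hb, rfl⟩ := mem_progEval.1 hf
  obtain ⟨n, hn⟩ := finset_bound (matSeq P E) (matSeq_mono P E) (fun B => B.subst σ) r.body
    (fun B hB => Set.mem_iUnion.1 (hb B hB))
  refine matSeq_subset_mat P E (n + 1) (Or.inr ?_)
  exact mem_progEval.2 ⟨r, hr, σ, fun B hB => hn B hB, rfl⟩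

lemma mat_min {P : Set Rule} {E J : Set Fact} (hE : E ⊆ J) (hcl : progEval P J ⊆ J) :
    mat P E ⊆ J := by
  have h : ∀ n, matSeq P E n ⊆ J := by
    intro n
    induction n with
    | zero => exact hE
    | succ n ih => exact Set.union_subset ih ((progEval_mono P ih).trans hcl)
  exact Set.iUnion_subset h

lemma mat_mono {P : Set Rule} {E E' : Set Fact} (h : E ⊆ E') : mat P E ⊆ mat P E' :=
  mat_min (h.trans (subset_mat P E')) (mat_closed P E')

/-! ### Deletion sequence -/

lemma delSeq_fst_mono (P : Set Rule) (I Em : Set Fact) :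
    Monotone fun k => (delSeq P I Em k).1 :=
  monotone_nat_of_le_succ fun k => by
    intro x hx
    exact Or.inl hx

lemma del_complete {P : Set Rule} {E Em I : Set Fact} (hI : I = mat P E)
    (D : Set Fact) (hD : D = ⋃ k, (delSeq P I Em k).1) :
    I \ D ⊆ mat P (E \ Em) := by
  classical
  have hDk : ∀ k, (delSeq P I Em k).1 ⊆ D := fun k => hD ▸ Set.subset_iUnion (fun k => (delSeq P I Em k).1) k
  have key : ∀ n, ∀ f ∈ matSeq P E n, f ∉ D → f ∈ mat P (E \ Em) := by
    intro n
    induction n with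
    | zero =>
      intro f hf hfD
      refine subset_mat P (E \ Em) ⟨hf, fun hfEm => hfD (hDk 1 ?_)⟩
      exact Or.inr ⟨hfEm, Set.notMem_empty f⟩
    | succ n ih =>
      intro f hf hfD
      rcases hf with hf | hf
      · exact ih f hf hfD
      obtain ⟨r, hr, σ, hb, rfl⟩ := mem_progEval.1 hf
      by_cases hall : ∀ B ∈ r.body, B.subst σ ∉ D
      · exact mat_closed P (E \ Em)
          (mem_progEval.2 ⟨r, hr, σ, fun B hB => ih _ (hb B hB) (hall B hB), rfl⟩)
      exfalso
      push_neg at hall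
      obtain ⟨B₀, hB₀, hB₀D⟩ := hall
      have hex : ∃ m, ∃ B ∈ r.body, B.subst σ ∈ (delSeq P I Em m).1 := by
        rw [hD] at hB₀D
        obtain ⟨m, hm⟩ := Set.mem_iUnion.1 hB₀D
        exact ⟨m, B₀, hB₀, hm⟩
      obtain ⟨k, hk⟩ : ∃ k, Nat.find hex = k + 1 := by
        refine Nat.exists_eq_succ_of_ne_zero fun h0 => ?_
        obtain ⟨B₁, _, hB₁m⟩ := Nat.find_spec hex
        rw [h0] at hB₁m
        exact Set.notMem_empty _ hB₁m
      have hnotk : ∀ B ∈ r.body, B.subst σ ∉ (delSeq P I Em k).1 := by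
        have := Nat.find_min hex (by omega : k < Nat.find hex)
        push_neg at this
        exact this
      obtain ⟨B₁, hB₁, hB₁k⟩ := Nat.find_spec hex
      rw [hk] at hB₁k
      have hB₁Δ : B₁.subst σ ∈ (delSeq P I Em k).2 \ (delSeq P I Em k).1 := by
        rcases hB₁k with h | h
        · exact absurd h (hnotk B₁ hB₁)
        · exact h
      have hbodyI : ∀ B ∈ r.body, B.subst σ ∈ I \ (delSeq P I Em k).1 := fun B hB =>
        ⟨hI ▸ matSeq_subset_mat P E n (hb B hB), hnotk B hB⟩
      have hfI : r.head.subst σ ∈ I :=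
        hI ▸ matSeq_subset_mat P E (n + 1) (Or.inr hf)
      have hfk : r.head.subst σ ∉ (delSeq P I Em k).1 := fun h => hfD (hDk k h)
      have hfΔ : r.head.subst σ ∉ (delSeq P I Em k).2 \ (delSeq P I Em k).1 := by
        intro h
        exact hfD (hDk (k + 1) (Or.inr h))
      have hfN : r.head.subst σ ∈ (delSeq P I Em (k + 1)).2 := by
        refine Set.mem_iUnion₂.2 ⟨r, hr, ?_⟩
        exact ⟨⟨σ, hbodyI, ⟨B₁, hB₁, hB₁Δ⟩, rfl⟩, ⟨hfI, hfk⟩, hfΔ⟩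
      have hfDk1 : r.head.subst σ ∉ (delSeq P I Em (k + 1)).1 := fun h => hfD (hDk (k + 1) h)
      exact hfD (hDk (k + 2) (Or.inr ⟨hfN, hfDk1⟩))
  rintro f ⟨hfI, hfD⟩
  rw [hI] at hfI
  obtain ⟨n, hn⟩ := Set.mem_iUnion.1 hfI
  exact key n f hn hfD

/-! ### Addition sequence -/

lemma addSeq_fst_mono (P : Set Rule) (J M0 : Set Fact) :
    Monotone fun k => (addSeq P J M0 k).1 :=
  monotone_nat_of_le_succ fun k => by
    intro x hx
    exact Or.inl hx

lemma add_correct {P : Set Rule} {J M0 : Set Fact}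
    (hcl : progEval P J ⊆ J ∪ M0) :
    J ∪ (⋃ k, (addSeq P J M0 k).1) = mat P (J ∪ M0) := by
  classical
  apply Set.Subset.antisymm
  · -- soundness
    have key : ∀ k, (addSeq P J M0 k).1 ⊆ mat P (J ∪ M0) ∧
        (addSeq P J M0 k).2 ⊆ mat P (J ∪ M0) := by
      intro k
      induction k with
      | zero =>
        exact ⟨by simp [addSeq], Set.subset_union_right.trans (subset_mat _ _)⟩
      | succ k ih =>
        have hA : (addSeq P J M0 (k + 1)).1 ⊆ mat P (J ∪ M0) :=
          Set.union_subset ih.1 ((Set.diff_subset).trans ih.2)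
        refine ⟨hA, ?_⟩
        intro f hf
        obtain ⟨r, hr, hfe, -⟩ := Set.mem_iUnion₂.1 hf
        apply mat_closed P (J ∪ M0)
        refine mem_progEval.2 ⟨r, hr, eval_mono r ?_ (evalDelta_subset r _ _ hfe)⟩
        exact Set.union_subset (Set.subset_union_left.trans (subset_mat _ _)) hA
    exact Set.union_subset (Set.subset_union_left.trans (subset_mat _ _))
      (Set.iUnion_subset fun k => (key k).1)
  · apply mat_min
    · -- base
      refine Set.union_subset Set.subset_union_left ?_
      intro x hx
      by_cases hxJ : x ∈ J
      · exact Or.inl hxJ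
      · refine Or.inr (Set.mem_iUnion.2 ⟨1, ?_⟩)
        exact Or.inr ⟨hx, fun h => hxJ (h.resolve_right (Set.notMem_empty x))⟩
    · -- closure
      intro f hf
      obtain ⟨r, hr, σ, hb, rfl⟩ := mem_progEval.1 hf
      have hbound : ∃ m, ∀ B ∈ r.body, B.subst σ ∈ J ∪ (addSeq P J M0 m).1 := by
        refine finset_bound (fun m => J ∪ (addSeq P J M0 m).1) ?_ _ r.body fun B hB => ?_
        · intro a b hab
          exact Set.union_subset_union_right J (addSeq_fst_mono P J M0 hab)
        · rcases hb B hB with h | h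
          · exact ⟨0, Or.inl h⟩
          · obtain ⟨m, hm⟩ := Set.mem_iUnion.1 h
            exact ⟨m, Or.inr hm⟩
      rcases Nat.eq_zero_or_eq_succ_pred (Nat.find hbound) with h0 | hsucc
      · -- all body in J
        have hbody : ∀ B ∈ r.body, B.subst σ ∈ J := by
          intro B hB
          have := Nat.find_spec hbound B hB
          rw [h0] at this
          exact this.resolve_right (Set.notMem_empty _)
        have hfJ : r.head.subst σ ∈ J ∪ M0 :=
          hcl (mem_progEval.2 ⟨r, hr, σ, hbody, rfl⟩)
        rcases hfJ with h | h
        · exact Or.inl h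
        · by_cases hJ : r.head.subst σ ∈ J
          · exact Or.inl hJ
          · refine Or.inr (Set.mem_iUnion.2 ⟨1, ?_⟩)
            exact Or.inr ⟨h, fun hc => hJ (hc.resolve_right (Set.notMem_empty _))⟩
      · set k := (Nat.find hbound) - 1 with hkdef
        have hk : Nat.find hbound = k + 1 := hsucc
        have hspec := Nat.find_spec hbound
        rw [hk] at hspec
        have hnotk : ¬ ∀ B ∈ r.body, B.subst σ ∈ J ∪ (addSeq P J M0 k).1 :=
          Nat.find_min hbound (by omega)
        push_neg at hnotk
        obtain ⟨B₁, hB₁, hB₁n⟩ := hnotk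
        have hB₁Δ : B₁.subst σ ∈ (addSeq P J M0 k).2 \ (J ∪ (addSeq P J M0 k).1) := by
          have := hspec B₁ hB₁
          rcases this with h | h
          · exact absurd (Or.inl h) hB₁n
          · rcases h with h | h
            · exact absurd (Or.inr h) hB₁n
            · exact h
        have hfe : r.head.subst σ ∈
            r.evalDelta (J ∪ (addSeq P J M0 (k + 1)).1)
              ((addSeq P J M0 k).2 \ (J ∪ (addSeq P J M0 k).1)) :=
          ⟨σ, hspec, ⟨B₁, hB₁, hB₁Δ⟩, rfl⟩
        by_cases hfin : r.head.subst σ ∈ J ∪ (addSeq P J M0 (k + 1)).1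
        · rcases hfin with h | h
          · exact Or.inl h
          · exact Or.inr (Set.mem_iUnion.2 ⟨k + 1, h⟩)
        · have hfM : r.head.subst σ ∈ (addSeq P J M0 (k + 1)).2 :=
            Set.mem_iUnion₂.2 ⟨r, hr, hfe, hfin⟩
          refine Or.inr (Set.mem_iUnion.2 ⟨k + 2, ?_⟩)
          exact Or.inr ⟨hfM, hfin⟩

/-- Theorem 1: correctness of the DRed algorithm:
`(I \ D) ∪ A = mat(Π, (E \ E⁻) ∪ E⁺)`. -/
theorem dred_correct (P : Set Rule) (hP : P.Finite) (hne : ∀ r ∈ P, r.body.Nonempty)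
    (E Ep Em I : Set Fact) (hI : I = mat P E)
    (D R A : Set Fact)
    (hD : D = ⋃ k, (delSeq P I ((Em ∩ E) \ Ep) k).1)
    (hR : R = ((E \ ((Em ∩ E) \ Ep)) ∩ D) ∪ ⋃ r ∈ P, (r.eval (I \ D) ∩ D))
    (hA : A = ⋃ k, (addSeq P (I \ D) ((R ∪ (Ep \ E)) \ (I \ D)) k).1) :
    (I \ D) ∪ A = mat P ((E \ Em) ∪ Ep) := by
  set Em' := (Em ∩ E) \ Ep with hEm'
  set Ep' := Ep \ E with hEp'
  have hE' : (E \ Em) ∪ Ep = (E \ Em') ∪ Ep' := by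
    ext x
    simp only [Set.mem_union, Set.mem_diff, Set.mem_inter_iff, hEm', hEp']
    tauto
  rw [hE']
  have hIJ : I \ D ⊆ mat P (E \ Em') := del_complete hI D hD
  have hIcl : progEval P I ⊆ I := by rw [hI]; exact mat_closed P E
  set M0 := (R ∪ Ep') \ (I \ D) with hM0
  have hclJ : progEval P (I \ D) ⊆ (I \ D) ∪ M0 := by
    intro f hf
    have hfI : f ∈ I := hIcl (progEval_mono P Set.diff_subset hf)
    by_cases hfD : f ∈ D
    · have hfR : f ∈ R := by
        rw [hR]
        right
        obtain ⟨r, hr, hfr⟩ := mem_progEval.1 hf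
        exact Set.mem_iUnion₂.2 ⟨r, hr, hfr, hfD⟩
      exact Or.inr ⟨Or.inl hfR, fun h => h.2 hfD⟩
    · exact Or.inl ⟨hfI, hfD⟩
  have hadd : (I \ D) ∪ A = mat P ((I \ D) ∪ M0) := by
    rw [hA]
    exact add_correct hclJ
  rw [hadd]
  apply Set.Subset.antisymm
  · apply mat_min _ (mat_closed P ((E \ Em') ∪ Ep'))
    have h1 : I \ D ⊆ mat P ((E \ Em') ∪ Ep') :=
      hIJ.trans (mat_mono Set.subset_union_left)
    refine Set.union_subset h1 ?_
    have hRm : R ⊆ mat P ((E \ Em') ∪ Ep') := by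
      rw [hR]
      refine Set.union_subset ?_ ?_
      · exact fun x hx => subset_mat _ _ (Or.inl hx.1)
      · refine Set.iUnion₂_subset fun r hr => ?_
        rintro f ⟨hfe, -⟩
        exact mat_closed P _ (mem_progEval.2 ⟨r, hr, eval_mono r h1 hfe⟩)
    refine (Set.diff_subset).trans (Set.union_subset hRm ?_)
    exact fun x hx => subset_mat _ _ (Or.inr hx)
  · apply mat_mono
    intro x hx
    by_cases hxJ : x ∈ I \ D
    · exact Or.inl hxJ
    · refine Or.inr ⟨?_, hxJ⟩
      rcases hx with hxE | hxEp
      · left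
        rw [hR]
        left
        have hxI : x ∈ I := by
          rw [hI]
          exact subset_mat P E hxE.1
        have hxD : x ∈ D := by
          by_contra hc
          exact hxJ ⟨hxI, hc⟩
        exact ⟨hxE, hxD⟩
      · right
        exact hxEp

end Datalog
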